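/- Let ℝ[[x]] have termwise differentiation and integration, let k, h ∈ ℝ[[x]] be invertible (nonzero constant term), and define D_K(f) := h⁻¹·(f·k⁻¹)' and P_K(f) := k·∫₀ˣ(h·f), where ∫₀ˣ denotes termwise integration. Then D_K ∘ P_K = id on ℝ[[x]], D_K satisfies D_K(fg) = D_K(f)g + fD_K(g) - fD_K(1)g, and P_K satisfies the weighted Reynolds identity P_K(f)P_K(g) = P_K(fP_K(g)) + P_K(P_K(f)g) - P_K(D_K(1)P_K(f)P_K(g)) for all f,g ∈ ℝ[[x]]. -/

import Mathlib

open PowerSeries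

/-- Termwise integration on `ℝ⟦X⟧`. -/
noncomputable def integ (f : ℝ⟦X⟧) : ℝ⟦X⟧ :=
  PowerSeries.mk fun n => if n = 0 then 0 else (PowerSeries.coeff (n - 1) f) / n

/-- `D_K(f) = h⁻¹·(f·k⁻¹)'`. -/
noncomputable def DK (k h f : ℝ⟦X⟧) : ℝ⟦X⟧ := h⁻¹ * derivativeFun (f * k⁻¹)

/-- `P_K(f) = k·∫₀ˣ(h·f)`. -/
noncomputable def PK (k h f : ℝ⟦X⟧) : ℝ⟦X⟧ := k * integ (h * f)

/-!
`D_K` and `P_K` are differentiation and integration conjugated by the units `k` and `h`, so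
`D_K ∘ P_K = id`, and `P_K ∘ D_K = id` on series with zero constant term. The Leibniz rule for
the derivative of `f · g · k⁻¹` yields the modified Leibniz rule for `D_K`. Applying it to
`P_K f · P_K g`, which has zero constant term, and then applying `P_K` gives the Reynolds identity.
-/

lemma DK_eq (k h f : ℝ⟦X⟧) : DK k h f = h⁻¹ * d⁄dX ℝ (f * k⁻¹) := rfl

section Integ

lemma coeff_integ_succ (f : ℝ⟦X⟧) (n : ℕ) : coeff (n + 1) (integ f) = coeff n f / (n + 1) := by
  simp [integ]

lemma constantCoeff_integ (f : ℝ⟦X⟧) : constantCoeff (integ f) = 0 := by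
  simp [integ]

lemma derivative_integ (f : ℝ⟦X⟧) : d⁄dX ℝ (integ f) = f := by
  ext n
  rw [coeff_derivative, coeff_integ_succ]
  field_simp

lemma integ_derivative_of_constantCoeff_eq_zero {f : ℝ⟦X⟧} (hf : constantCoeff f = 0) :
    integ (d⁄dX ℝ f) = f :=
  derivative.ext (derivative_integ _) (by rw [constantCoeff_integ, hf])

lemma integ_add (f g : ℝ⟦X⟧) : integ (f + g) = integ f + integ g :=
  derivative.ext (by simp only [map_add, derivative_integ]) (by simp [constantCoeff_integ])

lemma integ_sub (f g : ℝ⟦X⟧) : integ (f - g) = integ f - integ g :=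
  derivative.ext (by simp only [map_sub, derivative_integ]) (by simp [constantCoeff_integ])

end Integ

section Operators

variable {k h : ℝ⟦X⟧}

lemma PK_add (f g : ℝ⟦X⟧) : PK k h (f + g) = PK k h f + PK k h g := by
  simp only [PK, mul_add, integ_add]

lemma PK_sub (f g : ℝ⟦X⟧) : PK k h (f - g) = PK k h f - PK k h g := by
  simp only [PK, mul_sub, integ_sub]

lemma constantCoeff_PK (f : ℝ⟦X⟧) : constantCoeff (PK k h f) = 0 := by
  simp [PK, constantCoeff_integ]

lemma DK_mul (f g : ℝ⟦X⟧) :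
    DK k h (f * g) = DK k h f * g + f * DK k h g - f * DK k h 1 * g := by
  simp only [DK_eq, one_mul, mul_assoc f g, Derivation.leibniz, smul_eq_mul]
  ring

lemma DK_PK (hk : constantCoeff k ≠ 0) (hh : constantCoeff h ≠ 0) (f : ℝ⟦X⟧) :
    DK k h (PK k h f) = f := by
  rw [DK_eq, PK, mul_comm k, mul_assoc, PowerSeries.mul_inv_cancel k hk, mul_one,
    derivative_integ, ← mul_assoc, PowerSeries.inv_mul_cancel h hh, one_mul]

lemma PK_DK_of_constantCoeff_eq_zero (hk : constantCoeff k ≠ 0) (hh : constantCoeff h ≠ 0)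
    {u : ℝ⟦X⟧} (hu : constantCoeff u = 0) : PK k h (DK k h u) = u := by
  have hu' : constantCoeff (u * k⁻¹) = 0 := by simp [hu]
  rw [PK, DK_eq, ← mul_assoc, PowerSeries.mul_inv_cancel h hh, one_mul,
    integ_derivative_of_constantCoeff_eq_zero hu', mul_comm u, ← mul_assoc,
    PowerSeries.mul_inv_cancel k hk, one_mul]

lemma PK_mul_PK (hk : constantCoeff k ≠ 0) (hh : constantCoeff h ≠ 0) (f g : ℝ⟦X⟧) :
    PK k h f * PK k h g = PK k h (f * PK k h g) + PK k h (PK k h f * g)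
      - PK k h (DK k h 1 * (PK k h f * PK k h g)) := by
  set F := PK k h f
  set G := PK k h g
  have hFG : constantCoeff (F * G) = 0 := by simp [F, constantCoeff_PK]
  calc F * G = PK k h (DK k h (F * G)) := (PK_DK_of_constantCoeff_eq_zero hk hh hFG).symm
    _ = PK k h (f * G + F * g - DK k h 1 * (F * G)) := by
      rw [DK_mul, DK_PK hk hh, DK_PK hk hh]
      ring_nf
    _ = PK k h (f * G) + PK k h (F * g) - PK k h (DK k h 1 * (F * G)) := by
      rw [PK_sub, PK_add]

end Operators

/-- For invertible `k, h ∈ ℝ[[x]]`: `D_K∘P_K = id`, `D_K` is a modified differential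
operator, and `P_K` satisfies the weighted Reynolds identity of weight `D_K(1)`. -/
theorem stmt15 (k h : ℝ⟦X⟧)
    (hk : constantCoeff k ≠ 0) (hh : constantCoeff h ≠ 0) :
    (∀ f : ℝ⟦X⟧, DK k h (PK k h f) = f) ∧
    (∀ f g : ℝ⟦X⟧, DK k h (f * g) = DK k h f * g + f * DK k h g - f * DK k h 1 * g) ∧
    (∀ f g : ℝ⟦X⟧, PK k h f * PK k h g =
        PK k h (f * PK k h g) + PK k h (PK k h f * g)
          - PK k h (DK k h 1 * (PK k h f * PK k h g))) :=
  ⟨DK_PK hk hh, DK_mul, PK_mul_PK hk hh⟩
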